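/- Let G be a residually finite group acting freely and properly discontinuously on a topological space U, and let K ⊆ U be a compact subset. If (N_i) is a descending chain of finite-index normal subgroups of G with trivial intersection, then for all sufficiently large i the quotient map U → U/N_i is injective on K. -/

import Mathlib

/-! A properly discontinuous action moves a compact set `K` back onto itself only by finitely many
elements of `G`. Each nontrivial one of them eventually leaves the descending chain `N i`, since
the chain has trivial intersection; from then on only `1 ∈ N i` can identify two points of `K`. -/

open Filter

namespace Subgroup

variable {G ι : Type*} [Group G] [Preorder ι] {N : ι → Subgroup G}

theorem eventually_notMem_of_antitone_of_iInf_eq_bot (hN : Antitone N) (hbot : ⨅ i, N i = ⊥)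
    {g : G} (hg : g ≠ 1) : ∀ᶠ i in atTop, g ∉ N i := by
  obtain ⟨i₀, hi₀⟩ : ∃ i, g ∉ N i := by
    by_contra! h
    exact hg (mem_bot.mp (hbot ▸ mem_iInf.mpr h))
  filter_upwards [eventually_ge_atTop i₀] with i hi using fun hgi => hi₀ (hN hi hgi)

theorem eventually_forall_mem_eq_one_of_antitone_of_iInf_eq_bot (hN : Antitone N)
    (hbot : ⨅ i, N i = ⊥) {S : Set G} (hS : S.Finite) :
    ∀ᶠ i in atTop, ∀ g ∈ S, g ∈ N i → g = 1 := by
  refine (eventually_all_finite hS).mpr fun g _ => ?_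
  by_cases hg : g = 1
  · exact Eventually.of_forall fun _ _ => hg
  · filter_upwards [eventually_notMem_of_antitone_of_iInf_eq_bot hN hbot hg] with i hi
    exact fun hgi => absurd hgi hi

end Subgroup

theorem stmt_1_general {G : Type*} [Group G] {U : Type*} [TopologicalSpace U]
    [MulAction G U] [ProperlyDiscontinuousSMul G U]
    (K : Set U) (hK : IsCompact K)
    (N : ℕ → Subgroup G)
    (hdesc : Antitone N) (htriv : (⨅ i, N i) = ⊥) :
    ∃ i₀ : ℕ, ∀ i ≥ i₀, ∀ x ∈ K, ∀ y ∈ K, (∃ g ∈ N i, g • x = y) → x = y := by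
  have hS : { g : G | ((g • ·) '' K ∩ K).Nonempty }.Finite :=
    ProperlyDiscontinuousSMul.finite_disjoint_inter_image hK hK
  obtain ⟨i₀, hi₀⟩ := eventually_atTop.mp
    (Subgroup.eventually_forall_mem_eq_one_of_antitone_of_iInf_eq_bot hdesc htriv hS)
  refine ⟨i₀, fun i hi x hx y hy ⟨g, hgN, hgxy⟩ => ?_⟩
  have hg : g = 1 := hi₀ i hi g ⟨y, ⟨x, hx, hgxy⟩, hy⟩ hgN
  rw [← hgxy, hg, one_smul]

theorem stmt_1 {G : Type*} [Group G] {U : Type*} [TopologicalSpace U] [T2Space U]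
    [MulAction G U] [ContinuousConstSMul G U] [ProperlyDiscontinuousSMul G U]
    (hfree : ∀ (g : G) (x : U), g • x = x → g = 1)
    (K : Set U) (hK : IsCompact K)
    (N : ℕ → Subgroup G) (hnorm : ∀ i, (N i).Normal) (hfin : ∀ i, (N i).FiniteIndex)
    (hdesc : Antitone N) (htriv : (⨅ i, N i) = ⊥) :
    ∃ i₀ : ℕ, ∀ i ≥ i₀, ∀ x ∈ K, ∀ y ∈ K, (∃ g ∈ N i, g • x = y) → x = y :=
  stmt_1_general K hK N hdesc htriv
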